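/- Totient of a mixed expansion in two directions: let S be a tuple and let s, t : Fin n be directions. Suppose k₁ is the least positive integer with E_s^{k₁} S = 0, k₂ is the least positive integer with E_t^{k₂} S = 0, and suppose that for all u, v with 1 ≤ u < k₂ and 1 ≤ v < k₁ one has E_s^v (E_t^u S) ≠ 0 (no dropler effect). Then min(k₁, k₂) is the least positive integer k with (E_t ∘ E_s)^k S = 0; that is, Φ[(E_t ∘ E_s), S] = min(k₁, k₂). -/

import Mathlib

open MvPolynomial MeasureTheory

/-- The expansion operator in direction `i`: the paper's composite map
`(γ⁻¹ ∘ β ∘ γ ∘ ∇)_{[x_i]}`, sending a tuple `S` to the tuple whose `k`-th entry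
is the sum of the partial derivatives (in direction `i`) of all other entries. -/
noncomputable def expandDir {s n : ℕ} (i : Fin n) (S : Fin s → MvPolynomial (Fin n) ℝ) :
    Fin s → MvPolynomial (Fin n) ℝ :=
  fun k => ∑ t ∈ Finset.univ.filter (fun t => t ≠ k), MvPolynomial.pderiv i (S t)

/-- The mixed expansion operator `M = E_{σ 0} ∘ E_{σ 1} ∘ ⋯ ∘ E_{σ (l-1)}`. -/
noncomputable def mixedExpand {s n l : ℕ} (σ : Fin l → Fin n) :
    (Fin s → MvPolynomial (Fin n) ℝ) → (Fin s → MvPolynomial (Fin n) ℝ) :=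
  (List.ofFn (fun i => expandDir (s := s) (σ i))).foldr (fun f g => f ∘ g) id

/-!
Partial derivatives in different directions commute, hence so do `E_s` and `E_t`, and
`(E_t ∘ E_s)^[k] = E_t^[k] ∘ E_s^[k]`. Both operators fix `0`, so this vanishes on `S` once
`k ≥ k₁` or `k ≥ k₂`; below `min k₁ k₂` it is nonzero by the no-dropler hypothesis with `u = v = k`.
-/

/-- The commutator of two partial derivatives is a derivation vanishing on the variables. -/
theorem MvPolynomial.pderiv_pderiv_comm {R σ : Type*} [CommRing R] (i j : σ)
    (p : MvPolynomial σ R) : pderiv i (pderiv j p) = pderiv j (pderiv i p) := by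
  classical
  have h : ⁅pderiv i, pderiv j⁆ = (0 : Derivation R (MvPolynomial σ R) (MvPolynomial σ R)) :=
    derivation_ext fun k => by
      rw [Derivation.commutator_apply]
      simp [pderiv_X, Pi.single_apply, apply_ite]
  have := congr($h p)
  rwa [Derivation.commutator_apply, Derivation.zero_apply, sub_eq_zero] at this

theorem Function.Commute.isLeast_iterate_comp_eq_zero {α : Type*} [Zero α] {f g : α → α}
    (hfg : Function.Commute f g) (hf : f 0 = 0) (hg : g 0 = 0) {x : α} {k₁ k₂ : ℕ}
    (h₁ : 0 < k₁ ∧ f^[k₁] x = 0) (h₂ : 0 < k₂ ∧ g^[k₂] x = 0)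
    (hne : ∀ k, 0 < k → k < k₁ → k < k₂ → f^[k] (g^[k] x) ≠ 0) :
    IsLeast {k | 0 < k ∧ (g ∘ f)^[k] x = 0} (min k₁ k₂) := by
  have hsplit : ∀ k, (g ∘ f)^[k] x = g^[k] (f^[k] x) := fun k => by
    rw [hfg.symm.comp_iterate]; rfl
  refine ⟨⟨lt_min h₁.1 h₂.1, ?_⟩, fun k ⟨hk, hzero⟩ => ?_⟩
  · rw [hsplit]
    rcases min_choice k₁ k₂ with hmin | hmin <;> rw [hmin]
    · rw [h₁.2, iterate_fixed hg]
    · rw [← hfg.iterate_iterate k₂ k₂ x, h₂.2, iterate_fixed hf]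
  · by_contra! hlt
    rw [hsplit, ← hfg.iterate_iterate k k x] at hzero
    exact hne k hk (hlt.trans_le (min_le_left _ _)) (hlt.trans_le (min_le_right _ _)) hzero

theorem expandDir_zero {s n : ℕ} (i : Fin n) : expandDir (s := s) i 0 = 0 := by
  funext k
  simp [expandDir]

theorem expandDir_commute {s n : ℕ} (i j : Fin n) :
    Function.Commute (expandDir (s := s) i) (expandDir j) := fun S => by
  funext k
  simp only [expandDir, map_sum, pderiv_pderiv_comm i j]

/-- totient of a mixed expansion in two directions, assuming no dropler
effect, equals the minimum of the two totients. -/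
theorem totient_mixed_two (s n : ℕ) (S : Fin s → MvPolynomial (Fin n) ℝ)
    (d₁ d₂ : Fin n) (k₁ k₂ : ℕ)
    (h₁ : IsLeast {m | 0 < m ∧ (expandDir d₁)^[m] S = 0} k₁)
    (h₂ : IsLeast {m | 0 < m ∧ (expandDir d₂)^[m] S = 0} k₂)
    (hnd : ∀ u v : ℕ, 1 ≤ u → u < k₂ → 1 ≤ v → v < k₁ →
      (expandDir d₁)^[v] ((expandDir d₂)^[u] S) ≠ 0) :
    IsLeast {k | 0 < k ∧ (expandDir d₂ ∘ expandDir d₁)^[k] S = 0} (min k₁ k₂) :=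
  (expandDir_commute d₁ d₂).isLeast_iterate_comp_eq_zero (expandDir_zero d₁) (expandDir_zero d₂)
    h₁.1 h₂.1 fun k hk hk₁ hk₂ => hnd k k hk hk₂ hk hk₁
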